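/- Let D be a domain with quotient field K and let S be a torsion-free monoid with quotient group G. Then 𝔛(D[S]) ⊆ {P[S] : P ∈ 𝔛(D)} ∪ {Q̄ ∩ D[S] : Q̄ ∈ 𝔛(K[S])}, where D[S] ⊆ K[S] is the canonical inclusion, and also 𝔛(D[S]) ⊆ {D[P] : P ∈ 𝔛(S)} ∪ {Q̄ ∩ D[S] : Q̄ ∈ 𝔛(D[G])}, where D[S] ⊆ D[G] is the canonical inclusion. -/

import Mathlib

/-! ### Basic notions for monoids, monoid algebras and domains -/

/-- A monoid `S` (written additively) is torsion-free if `n • x = n • y` implies `x = y`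
for all integers `n ≥ 1`. -/
def AddTorsionFree (S : Type*) [AddCommMonoid S] : Prop :=
  ∀ n : ℕ, n ≠ 0 → ∀ x y : S, n • x = n • y → x = y

/-- An ideal of an additive monoid `S` is a nonempty subset `P` with `P + S ⊆ P`. -/
def IsMonoidIdeal {S : Type*} [AddCommMonoid S] (P : Set S) : Prop :=
  P.Nonempty ∧ ∀ p ∈ P, ∀ s : S, p + s ∈ P

/-- An ideal `P` of an additive monoid `S` is prime if `P ≠ S` and
`s + t ∈ P` implies `s ∈ P` or `t ∈ P`. -/
def IsMonoidPrimeIdeal {S : Type*} [AddCommMonoid S] (P : Set S) : Prop :=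
  IsMonoidIdeal P ∧ P ≠ Set.univ ∧ ∀ s t : S, s + t ∈ P → s ∈ P ∨ t ∈ P

/-- `P ∈ 𝔛(S)`: `P` is a minimal nonempty prime ideal of the monoid `S`. -/
def IsMinMonoidPrime {S : Type*} [AddCommMonoid S] (P : Set S) : Prop :=
  IsMonoidPrimeIdeal P ∧ ∀ Q : Set S, IsMonoidPrimeIdeal Q → Q ⊆ P → Q = P

/-- `P ∈ 𝔛(R)`: `P` is a height-one prime ideal of `R`, i.e. a nonzero prime ideal
that is minimal among the nonzero prime ideals. -/
def IsHeightOnePrime {R : Type*} [CommRing R] (P : Ideal R) : Prop :=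
  P.IsPrime ∧ P ≠ ⊥ ∧ ∀ Q : Ideal R, Q.IsPrime → Q < P → Q = ⊥

/-- `D[P]` for a subset `P ⊆ S`: the set of elements of the monoid algebra `D[S]`
all of whose exponents lie in `P`. -/
def expIn (D : Type*) {S : Type*} [CommRing D] [AddCommMonoid S] (P : Set S) :
    Set (AddMonoidAlgebra D S) :=
  {f | ∀ s ∈ f.coeff.support, s ∈ P}

/-- `I[S]` for an ideal `I` of `D`: the set of elements of the monoid algebra `D[S]`
all of whose coefficients lie in `I`. -/
def coeffIn {D : Type*} (S : Type*) [CommRing D] [AddCommMonoid S] (I : Ideal D) :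
    Set (AddMonoidAlgebra D S) :=
  {f | ∀ s : S, f.coeff s ∈ I}

/-- `φ : S →+ G` realizes `G` as the quotient (Grothendieck) group of `S`:
`φ` is injective and every element of `G` is a difference of elements of `φ(S)`. -/
def IsQuotientGroup {S G : Type*} [AddCommMonoid S] [AddCommGroup G] (φ : S →+ G) : Prop :=
  Function.Injective φ ∧ ∀ g : G, ∃ s t : S, g = φ s - φ t

/-- A subgroup is cyclic if it is generated by a single element. -/
def IsCyclicAddSubgroup {G : Type*} [AddCommGroup G] (H : AddSubgroup G) : Prop :=
  ∃ g : G, H = AddSubgroup.closure {g}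

/-- `G` satisfies the ACC on cyclic subgroups: every ascending chain of cyclic
subgroups of `G` stabilizes. -/
def ACCOnCyclicSubgroups (G : Type*) [AddCommGroup G] : Prop :=
  ∀ c : ℕ →o AddSubgroup G, (∀ n, IsCyclicAddSubgroup (c n)) →
    ∃ N, ∀ n, N ≤ n → c n = c N

/-- `D` is `S`-UMT: `P[S] ∈ 𝔛(D[S])` for every `P ∈ 𝔛(D)`. -/
def IsDomainUMT (D S : Type*) [CommRing D] [AddCommMonoid S] : Prop :=
  ∀ P : Ideal D, IsHeightOnePrime P →
    ∃ Q : Ideal (AddMonoidAlgebra D S), (Q : Set (AddMonoidAlgebra D S)) = coeffIn S P ∧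
      IsHeightOnePrime Q

/-- `S` is `D`-UMT: `D[P] ∈ 𝔛(D[S])` for every `P ∈ 𝔛(S)`. -/
def IsMonoidUMT (D S : Type*) [CommRing D] [AddCommMonoid S] : Prop :=
  ∀ P : Set S, IsMinMonoidPrime P →
    ∃ Q : Ideal (AddMonoidAlgebra D S), (Q : Set (AddMonoidAlgebra D S)) = expIn D P ∧
      IsHeightOnePrime Q

/-- The localization `R_P` of `R` at a prime ideal `P`, as a subset of the fraction
field of `R`. -/
def locAt {R : Type*} [CommRing R] (P : Ideal R) : Set (FractionRing R) :=
  {x | ∃ a b : R, b ∉ P ∧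
    x * algebraMap R (FractionRing R) b = algebraMap R (FractionRing R) a}

/-- A domain `R` is weakly Krull if `R = ⋂_{P ∈ 𝔛(R)} R_P` inside its quotient field and
every nonzero nonunit of `R` lies in only finitely many height-one primes. -/
def IsWeaklyKrullDomain (R : Type*) [CommRing R] : Prop :=
  (∀ x : FractionRing R, (∀ P : Ideal R, IsHeightOnePrime P → x ∈ locAt P) →
      ∃ r : R, x = algebraMap R (FractionRing R) r) ∧
  ∀ r : R, r ≠ 0 → ¬IsUnit r → {P : Ideal R | IsHeightOnePrime P ∧ r ∈ P}.Finite

/-- The localization `S_P = {s - t : s ∈ S, t ∈ S ∖ P}` of the monoid `S` at `P`,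
inside the quotient group of `S` realized by `φ`. -/
def monLocAt {S G : Type*} [AddCommMonoid S] [AddCommGroup G] (φ : S →+ G) (P : Set S) :
    Set G :=
  {g | ∃ s t : S, t ∉ P ∧ g = φ s - φ t}

/-- A monoid `S` is weakly Krull if `S = ⋂_{P ∈ 𝔛(S)} S_P` inside its quotient group and
every nonunit of `S` lies in only finitely many minimal nonempty primes. -/
def IsWeaklyKrullMonoid {S G : Type*} [AddCommMonoid S] [AddCommGroup G] (φ : S →+ G) :
    Prop :=
  (∀ g : G, (∀ P : Set S, IsMinMonoidPrime P → g ∈ monLocAt φ P) → ∃ s : S, g = φ s) ∧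
  ∀ s : S, ¬IsAddUnit s → {P : Set S | IsMinMonoidPrime P ∧ s ∈ P}.Finite

/-- A Krull domain: a weakly Krull domain each of whose localizations at height-one
primes is a discrete rank-one valuation ring, i.e. the ring of nonnegative elements of a
`ℤ`-valued valuation on the quotient field. -/
def IsKrullDomain (R : Type*) [CommRing R] : Prop :=
  IsWeaklyKrullDomain R ∧
  ∀ P : Ideal R, IsHeightOnePrime P →
    ∃ v : (FractionRing R)ˣ →* Multiplicative ℤ,
      ∀ x : (FractionRing R)ˣ, ((x : FractionRing R) ∈ locAt P ↔ 0 ≤ Multiplicative.toAdd (v x))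

/-- A Krull monoid: a weakly Krull monoid such that for each `P ∈ 𝔛(S)` there is a
group homomorphism `v : q(S) → ℤ` with `S_P = {x : v x ≥ 0}`. -/
def IsKrullMonoid {S G : Type*} [AddCommMonoid S] [AddCommGroup G] (φ : S →+ G) : Prop :=
  IsWeaklyKrullMonoid φ ∧
  ∀ P : Set S, IsMinMonoidPrime P →
    ∃ v : G →+ ℤ, ∀ g : G, g ∈ monLocAt φ P ↔ 0 ≤ v g

/-- A generalized Krull domain: a weakly Krull domain each of whose localizations `R_P`
at height-one primes is a valuation domain: every `x` in the quotient field satisfies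
`x ∈ R_P` or `x⁻¹ ∈ R_P`. -/
def IsGeneralizedKrullDomain (R : Type*) [CommRing R] : Prop :=
  IsWeaklyKrullDomain R ∧
  ∀ P : Ideal R, IsHeightOnePrime P →
    ∀ x : FractionRing R, x ∈ locAt P ∨ ∃ y ∈ locAt P, x * y = 1

/-- A generalized Krull monoid: a weakly Krull monoid each of whose localizations `S_P`
at minimal primes is a valuation monoid of `q(S)`: `g ∈ S_P` or `-g ∈ S_P` for all `g`. -/
def IsGeneralizedKrullMonoid {S G : Type*} [AddCommMonoid S] [AddCommGroup G]
    (φ : S →+ G) : Prop :=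
  IsWeaklyKrullMonoid φ ∧
  ∀ P : Set S, IsMinMonoidPrime P → ∀ g : G, g ∈ monLocAt φ P ∨ -g ∈ monLocAt φ P

/-! ### The `t`-operation and UMT-domains -/

/-- For a subset `A` of the quotient field of `R`, the set
`A⁻¹ = {x : x • A ⊆ R}` inside the quotient field. -/
def setInv {R : Type*} [CommRing R] (A : Set (FractionRing R)) : Set (FractionRing R) :=
  {x | ∀ a ∈ A, ∃ r : R, x * a = algebraMap R (FractionRing R) r}

/-- `I_v = (I⁻¹)⁻¹` for an ideal `I` of `R`, as a subset of the quotient field. -/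
def idealV {R : Type*} [CommRing R] (I : Ideal R) : Set (FractionRing R) :=
  setInv (setInv (algebraMap R (FractionRing R) '' (I : Set R)))

/-- `I` is a `t`-ideal: `I_t = I`, i.e. `J_v ⊆ I` for every nonzero finitely generated
ideal `J ⊆ I` (the inclusion `I ⊆ I_t` always holds). -/
def IsTIdeal {R : Type*} [CommRing R] (I : Ideal R) : Prop :=
  ∀ J : Ideal R, J ≤ I → J.FG → J ≠ ⊥ →
    idealV J ⊆ algebraMap R (FractionRing R) '' (I : Set R)

/-- A maximal `t`-ideal: an ideal maximal among proper `t`-ideals. -/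
def IsMaximalTIdeal {R : Type*} [CommRing R] (I : Ideal R) : Prop :=
  I ≠ ⊤ ∧ IsTIdeal I ∧ ∀ J : Ideal R, J ≠ ⊤ → IsTIdeal J → I ≤ J → I = J

/-- A UMT-domain: every (nonzero) prime ideal of `D[X]` contracting to `(0)` in `D`
(an "upper to zero") is a maximal `t`-ideal of `D[X]`. -/
def IsUMTDomain (D : Type*) [CommRing D] : Prop :=
  ∀ Q : Ideal (Polynomial D), Q.IsPrime → Q ≠ ⊥ →
    Q.comap (Polynomial.C : D →+* Polynomial D) = ⊥ → IsMaximalTIdeal Q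

/-! ### GCD, primary elements, weak factoriality -/

/-- A GCD-domain: any two nonzero elements have a greatest common divisor. -/
def IsGCDDomain (R : Type*) [CommRing R] : Prop :=
  ∀ a b : R, a ≠ 0 → b ≠ 0 →
    ∃ d : R, d ∣ a ∧ d ∣ b ∧ ∀ e : R, e ∣ a → e ∣ b → e ∣ d

/-- Divisibility in an additive monoid: `a ∣ b ↔ b ∈ a + S`. -/
def AddDvd {S : Type*} [AddCommMonoid S] (a b : S) : Prop := ∃ c : S, b = a + c

/-- A GCD-monoid: any two elements have a greatest common divisor with respect to
the divisibility preorder. -/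
def IsGCDAddMonoid (S : Type*) [AddCommMonoid S] : Prop :=
  ∀ a b : S, ∃ d : S, AddDvd d a ∧ AddDvd d b ∧ ∀ e : S, AddDvd e a → AddDvd e b → AddDvd e d

/-- A primary element of a ring: the principal ideal it generates is primary. -/
def IsPrimaryElem {R : Type*} [CommRing R] (a : R) : Prop :=
  (Ideal.span {a} : Ideal R).IsPrimary

/-- A weakly factorial domain: every nonzero nonunit is a finite product of
primary elements. -/
def IsWeaklyFactorialDomain (R : Type*) [CommRing R] : Prop :=
  ∀ a : R, a ≠ 0 → ¬IsUnit a →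
    ∃ l : List R, (∀ b ∈ l, IsPrimaryElem b) ∧ a = l.prod

/-- A primary ideal of an additive monoid: an ideal `Q ≠ S` such that `s + t ∈ Q`
with `s ∉ Q` implies `n • t ∈ Q` for some `n ≥ 1`. -/
def IsMonoidPrimaryIdeal {S : Type*} [AddCommMonoid S] (Q : Set S) : Prop :=
  IsMonoidIdeal Q ∧ Q ≠ Set.univ ∧
    ∀ s t : S, s + t ∈ Q → s ∉ Q → ∃ n : ℕ, 1 ≤ n ∧ n • t ∈ Q

/-- A primary element of an additive monoid: the ideal `a + S` is primary. -/
def IsMonoidPrimaryElem {S : Type*} [AddCommMonoid S] (a : S) : Prop :=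
  IsMonoidPrimaryIdeal {x : S | ∃ s : S, x = a + s}

/-- A weakly factorial monoid: every nonunit is a finite sum of primary elements. -/
def IsWeaklyFactorialMonoid (S : Type*) [AddCommMonoid S] : Prop :=
  ∀ a : S, ¬IsAddUnit a →
    ∃ l : List S, (∀ b ∈ l, IsMonoidPrimaryElem b) ∧ a = l.sum

/-! ### The canonical inclusions `D[S] → K[S]` and `D[S] → D[G]` -/

/-- The canonical inclusion `D[S] → K[S]`, where `K` is the fraction field of `D`,
applying `D → K` to all coefficients. -/
noncomputable def coeffEmbed (D S : Type*) [CommRing D] [IsDomain D] [AddCommMonoid S] :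
    AddMonoidAlgebra D S →+* AddMonoidAlgebra (FractionRing D) S :=
  AddMonoidAlgebra.liftNCRingHom
    ((AddMonoidAlgebra.singleZeroRingHom).comp (algebraMap D (FractionRing D)))
    (AddMonoidAlgebra.of (FractionRing D) S) (fun {_ _} => Commute.all _ _)

/-- The canonical inclusion `D[S] → D[G]`, where `G` is the quotient group of `S`
realized by `φ`, applying `φ` to all exponents. -/
noncomputable def expEmbed (D : Type*) {S G : Type*} [CommRing D] [AddCommMonoid S]
    [AddCommGroup G] (φ : S →+ G) : AddMonoidAlgebra D S →+* AddMonoidAlgebra D G :=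
  AddMonoidAlgebra.mapDomainRingHom D φ

/-!
A height-one prime `Q` of `D[S]` is sorted by whether it meets `D ∖ 0`, and by whether it
contains a monomial. If `P = Q ∩ D ≠ 0`, then `P[S]`, the kernel of `D[S] → (D/P)[S]`, is a
nonzero prime inside `Q`, hence equal to `Q`, and minimality of `Q` makes `P` height one. If
`Q` contains monomials, their exponents form a prime ideal `P` of `S`, and `D[P]`, the kernel of
the endomorphism erasing the monomials with exponent in `P`, is a nonzero prime inside `Q`,
hence equal to `Q`, which makes `P` minimal. Otherwise `Q` avoids the nonzero constants
(resp. the monomials), at which `D[S]` localizes to `K[S]` (resp. `D[G]`), and localization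
preserves height-one primes avoiding the inverted set. Torsion-freeness enters only to make these
monoid algebras domains, through the unique-sums property of `G` and hence of `S`.
-/

open AddMonoidAlgebra

theorem AddTorsionFree.isAddTorsionFree {S : Type*} [AddCommMonoid S] (hS : AddTorsionFree S) :
    IsAddTorsionFree S :=
  (isAddTorsionFree_iff S).2 fun n hn x y hxy => hS n hn x y hxy

theorem IsQuotientGroup.isAddTorsionFree {S G : Type*} [AddCommMonoid S] [IsAddTorsionFree S]
    [AddCommGroup G] {φ : S →+ G} (hφ : IsQuotientGroup φ) : IsAddTorsionFree G := by
  refine (isAddTorsionFree_iff G).2 fun n hn x y (hxy : n • x = n • y) => ?_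
  obtain ⟨s, t, hst⟩ := hφ.2 (x - y)
  have hnst : n • s = n • t := hφ.1 <| by
    rw [map_nsmul, map_nsmul, ← sub_eq_zero, ← smul_sub, ← hst, smul_sub, hxy, sub_self]
  rw [← sub_eq_zero, hst, nsmul_right_injective hn hnst, sub_self]

/-- `G` embeds into the `ℚ`-vector space `ℚ ⊗ G`, as torsion-free abelian groups are flat. -/
theorem twoUniqueSums_of_isAddTorsionFree (G : Type*) [AddCommGroup G] [IsAddTorsionFree G] :
    TwoUniqueSums G :=
  .of_injective_addHom (TensorProduct.mk ℤ ℚ G 1).toAddMonoidHom.toAddHom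
    (Module.Flat.tensorProduct_mk_injective ℤ G ℚ) inferInstance

theorem IsHeightOnePrime.eq_of_le {R : Type*} [CommRing R] {Q J : Ideal R}
    (hQ : IsHeightOnePrime Q) (hJ : J.IsPrime) (hJ0 : J ≠ ⊥) (hJQ : J ≤ Q) : J = Q :=
  by_contra fun hne => hJ0 (hQ.2.2 J hJ (lt_of_le_of_ne hJQ hne))

theorem IsHeightOnePrime.exists_comap_eq_of_isLocalizationMap {A B : Type*} [CommRing A]
    [CommRing B] {M : Submonoid A} {f : A →+* B} (hf : M.IsLocalizationMap f)
    (hM : M ≤ nonZeroDivisors A) {Q : Ideal A} (hQ : IsHeightOnePrime Q)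
    (hQM : Disjoint (M : Set A) Q) :
    ∃ Q' : Ideal B, IsHeightOnePrime Q' ∧ Q'.comap f = Q := by
  let := f.toAlgebra
  have : IsLocalization M B := ⟨hf⟩
  obtain ⟨hQp, hQ0, hQmin⟩ := hQ
  have hcomap : (Q.map f).comap f = Q := IsLocalization.under_map_of_isPrime_disjoint M B hQp hQM
  have hmap (R : Ideal B) : (R.comap f).map f = R := IsLocalization.map_under M B R
  refine ⟨Q.map f, ⟨IsLocalization.isPrime_of_isPrime_disjoint M B Q hQp hQM, ?_, ?_⟩,
    hcomap⟩
  · intro h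
    rw [← hcomap, h, ← RingHom.ker_eq_comap_bot] at hQ0
    exact hQ0 ((RingHom.injective_iff_ker_eq_bot f).1 (IsLocalization.injective B hM))
  · intro R hR hRQ
    have hle : R.comap f ≤ Q := hcomap ▸ Ideal.comap_mono hRQ.le
    have hne : R.comap f ≠ Q := fun h => hRQ.ne (by rw [← hmap R, h])
    rw [← hmap R, hQmin _ (Ideal.comap_isPrime f R) (lt_of_le_of_ne hle hne), Ideal.map_bot]

namespace AddMonoidAlgebra

theorem isLocalizationMap_of_single {A R S : Type*} [CommRing A] [CommRing R] [AddCommMonoid S]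
    {M : Submonoid A} {f : A →+* R[S]} (map_units : ∀ m : M, IsUnit (f m))
    (hf : Function.Injective f)
    (single_surj : ∀ s r, ∃ x : A × M, single s r * f x.2 = f x.1) :
    M.IsLocalizationMap f where
  map_units := map_units
  surj z := by
    induction z using induction_linear with
    | zero => exact ⟨(0, 1), by simp⟩
    | add z w hz hw =>
      obtain ⟨⟨a, m⟩, ha⟩ := hz
      obtain ⟨⟨b, n⟩, hb⟩ := hw
      refine ⟨(a * n + b * m, m * n), ?_⟩
      simp only [Submonoid.coe_mul, map_add, map_mul]
      linear_combination f n * ha + f m * hb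
    | single s r => exact single_surj s r
  exists_of_eq h := ⟨1, by rw [hf h]⟩

theorem mem_ideal_of_forall_single_mem {R S : Type*} [CommSemiring R] [AddCommMonoid S]
    {I : Ideal R[S]} {f : R[S]} (h : ∀ s ∈ f.coeff.support, single s (f.coeff s) ∈ I) :
    f ∈ I := by
  rw [← sum_coeff_single f]
  exact I.sum_mem h

theorem single_mem_ideal_of_single_one_mem {R S : Type*} [CommSemiring R] [AddCommMonoid S]
    {I : Ideal R[S]} {s : S} (h : single s (1 : R) ∈ I) (r : R) : single s r ∈ I := by
  simpa [smul_single'] using I.smul_of_tower_mem r h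

end AddMonoidAlgebra

section Coefficients

variable {D : Type*} (S : Type*) [CommRing D] [AddCommMonoid S]

/-- The ideal `P[S]`. -/
noncomputable def coeffIdeal (P : Ideal D) : Ideal D[S] :=
  RingHom.ker (mapRingHom S (Ideal.Quotient.mk P))

variable {S}

theorem mem_coeffIdeal {P : Ideal D} {f : D[S]} : f ∈ coeffIdeal S P ↔ f ∈ coeffIn S P := by
  simp [coeffIdeal, coeffIn, ← coeff_injective.eq_iff, Finsupp.ext_iff,
    Ideal.Quotient.eq_zero_iff_mem]

theorem coeffIdeal_isPrime [UniqueSums S] (P : Ideal D) [P.IsPrime] : (coeffIdeal S P).IsPrime :=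
  RingHom.ker_isPrime _

theorem comap_coeffIdeal (P : Ideal D) : (coeffIdeal S P).comap (algebraMap D D[S]) = P := by
  ext d
  classical
  refine ⟨fun h => by simpa using mem_coeffIdeal.1 h 0, fun hd => mem_coeffIdeal.2 fun s => ?_⟩
  rw [coe_algebraMap, Function.comp_apply, coeff_single, Finsupp.single_apply]
  split_ifs
  exacts [hd, P.zero_mem]

theorem coeffIdeal_le_iff {P : Ideal D} {Q : Ideal D[S]} :
    coeffIdeal S P ≤ Q ↔ P ≤ Q.comap (algebraMap D D[S]) := by
  refine ⟨fun h => comap_coeffIdeal (S := S) P ▸ Ideal.comap_mono h, fun h f hf => ?_⟩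
  refine mem_ideal_of_forall_single_mem fun s _ => ?_
  rw [← mul_one (f.coeff s), ← smul_single', Algebra.smul_def]
  exact Q.mul_mem_right _ (h (mem_coeffIdeal.1 hf s))

theorem IsHeightOnePrime.isHeightOnePrime_comap_and_eq_coeffIn [UniqueSums S] {Q : Ideal D[S]}
    (hQ : IsHeightOnePrime Q) (hQD : Q.comap (algebraMap D D[S]) ≠ ⊥) :
    IsHeightOnePrime (Q.comap (algebraMap D D[S])) ∧
      (Q : Set D[S]) = coeffIn S (Q.comap (algebraMap D D[S])) := by
  have hC : (⊥ : Ideal D[S]).comap (algebraMap D D[S]) = ⊥ :=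
    Ideal.comap_bot_of_injective _ (FaithfulSMul.algebraMap_injective D D[S])
  set P := Q.comap (algebraMap D D[S])
  have := hQ.1
  have hPQ : coeffIdeal S P = Q := hQ.eq_of_le (coeffIdeal_isPrime P)
    (fun h => hQD (by rw [← comap_coeffIdeal (S := S) P, h, hC])) (coeffIdeal_le_iff.2 le_rfl)
  refine ⟨⟨inferInstance, hQD, fun R hR hRP => ?_⟩,
    Set.ext fun f => by rw [SetLike.mem_coe, ← hPQ, mem_coeffIdeal]⟩
  have hle : coeffIdeal S R ≤ Q := coeffIdeal_le_iff.2 hRP.le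
  have hne : coeffIdeal S R ≠ Q := fun h => hRP.ne (by rw [← comap_coeffIdeal (S := S) R, h])
  rw [← comap_coeffIdeal (S := S) R, hQ.2.2 _ (coeffIdeal_isPrime R) (lt_of_le_of_ne hle hne), hC]

end Coefficients

section Exponents

variable (D : Type*) {S : Type*} [CommRing D] [AddCommMonoid S] {P : Set S}

theorem IsMonoidPrimeIdeal.zero_notMem (hP : IsMonoidPrimeIdeal P) : (0 : S) ∉ P :=
  fun h0 => hP.2.1 (Set.eq_univ_of_forall fun s => zero_add s ▸ hP.1.2 0 h0 s)

open scoped Classical in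
/-- The ring endomorphism of `D[S]` erasing the monomials with exponent in `P`: it is
multiplicative because, `P` being a prime ideal, `s + t ∉ P` iff `s ∉ P` and `t ∉ P`. -/
noncomputable def eraseExpIn (hP : IsMonoidPrimeIdeal P) : D[S] →+* D[S] :=
  (lift D D[S] S
    { toFun := fun s => if s.toAdd ∈ P then 0 else single s.toAdd 1
      map_one' := by simp [hP.zero_notMem, one_def]
      map_mul' := fun s t => by
        simp only [toAdd_mul]
        by_cases hs : s.toAdd ∈ P
        · simp [hs, hP.1.2 _ hs]
        by_cases ht : t.toAdd ∈ P
        · simp [ht, add_comm s.toAdd, hP.1.2 _ ht]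
        have hst : s.toAdd + t.toAdd ∉ P := fun h => (hP.2.2 _ _ h).elim hs ht
        simp [hs, ht, hst, single_mul_single] }).toRingHom

open scoped Classical in
theorem coeff_eraseExpIn (hP : IsMonoidPrimeIdeal P) (f : D[S]) (s : S) :
    (eraseExpIn D hP f).coeff s = if s ∈ P then 0 else f.coeff s := by
  induction f using induction_linear with
  | zero => simp
  | add f g hf hg => simp only [map_add, coeff_add, Finsupp.add_apply, hf, hg]; split_ifs <;> simp
  | single t r =>
    obtain rfl | hts := eq_or_ne t s
    · by_cases ht : t ∈ P <;> simp [eraseExpIn, ht]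
    · by_cases ht : t ∈ P <;> simp [eraseExpIn, ht, hts]

/-- The ideal `D[P]`. -/
noncomputable def expIdeal (hP : IsMonoidPrimeIdeal P) : Ideal D[S] :=
  RingHom.ker (eraseExpIn D hP)

variable {D}

theorem mem_expIdeal {hP : IsMonoidPrimeIdeal P} {f : D[S]} :
    f ∈ expIdeal D hP ↔ f ∈ expIn D P := by
  classical
  simp only [expIdeal, RingHom.mem_ker, ← coeff_injective.eq_iff, Finsupp.ext_iff, coeff_zero,
    Finsupp.coe_zero, Pi.zero_apply, coeff_eraseExpIn, expIn, Finsupp.mem_support_iff]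
  refine forall_congr' fun s => ?_
  by_cases hs : s ∈ P <;> simp [hs]

theorem expIdeal_isPrime [IsDomain D] [UniqueSums S] (hP : IsMonoidPrimeIdeal P) :
    (expIdeal D hP).IsPrime :=
  RingHom.ker_isPrime _

theorem single_one_mem_expIdeal [Nontrivial D] {hP : IsMonoidPrimeIdeal P} {s : S} :
    single s (1 : D) ∈ expIdeal D hP ↔ s ∈ P := by
  rw [mem_expIdeal, expIn, Set.mem_ofPred_eq, coeff_single,
    Finsupp.support_single _ one_ne_zero]
  simp

theorem isMonoidPrimeIdeal_setOf_single_one_mem {Q : Ideal D[S]} (hQ : Q.IsPrime)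
    (hQS : ∃ s, single s (1 : D) ∈ Q) : IsMonoidPrimeIdeal {s | single s (1 : D) ∈ Q} := by
  refine ⟨⟨hQS, fun p hp s => ?_⟩, fun h => hQ.ne_top ?_, fun s t hst => hQ.mem_or_mem ?_⟩
  · simpa [single_mul_single] using Q.mul_mem_right (single s 1) hp
  · exact (Ideal.eq_top_iff_one Q).2 (h ▸ Set.mem_univ (0 : S) :)
  · simpa [single_mul_single] using hst

theorem IsHeightOnePrime.isMinMonoidPrime_and_eq_expIn [IsDomain D] [UniqueSums S]
    {Q : Ideal D[S]} (hQ : IsHeightOnePrime Q) (hQS : ∃ s, single s (1 : D) ∈ Q) :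
    IsMinMonoidPrime {s | single s (1 : D) ∈ Q} ∧
      (Q : Set D[S]) = expIn D {s | single s (1 : D) ∈ Q} := by
  set P := {s | single s (1 : D) ∈ Q}
  have hP : IsMonoidPrimeIdeal P := isMonoidPrimeIdeal_setOf_single_one_mem hQ.1 hQS
  have hsub {P' : Set S} (hP' : IsMonoidPrimeIdeal P') (hP'P : P' ⊆ P) : expIdeal D hP' = Q := by
    refine hQ.eq_of_le (expIdeal_isPrime hP') ?_ fun f hf => ?_
    · obtain ⟨p, hp⟩ := hP'.1.1
      exact (Submodule.ne_bot_iff _).2 ⟨single p 1, single_one_mem_expIdeal.2 hp, by simp⟩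
    · exact mem_ideal_of_forall_single_mem fun s hs =>
        single_mem_ideal_of_single_one_mem (hP'P (mem_expIdeal.1 hf s hs)) _
  refine ⟨⟨hP, fun P' hP' hP'P => hP'P.antisymm fun s hs => ?_⟩, ?_⟩
  · rwa [← single_one_mem_expIdeal (D := D) (hP := hP'), hsub hP' hP'P]
  · ext f
    rw [SetLike.mem_coe, ← hsub hP le_rfl, mem_expIdeal]

end Exponents

section Localization

variable {D : Type*} [CommRing D] [IsDomain D]

theorem IsHeightOnePrime.exists_comap_coeffEmbed_eq {S : Type*} [AddCommMonoid S] [UniqueSums S]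
    {Q : Ideal D[S]} (hQ : IsHeightOnePrime Q) (hQD : Q.comap (algebraMap D D[S]) = ⊥) :
    ∃ Q' : Ideal (FractionRing D)[S], IsHeightOnePrime Q' ∧ Q'.comap (coeffEmbed D S) = Q := by
  set M := Algebra.algebraMapSubmonoid D[S] (nonZeroDivisors D)
  have hembed : coeffEmbed D S = mapRingHom S (algebraMap D (FractionRing D)) := by
    ext <;> simp [coeffEmbed]
  have hloc : M.IsLocalizationMap (coeffEmbed D S) := by
    refine isLocalizationMap_of_single ?_ ?_ fun s k => ?_
    · rintro ⟨_, d, hd, rfl⟩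
      simpa [hembed] using (IsLocalization.map_units (FractionRing D) ⟨d, hd⟩).map
        (algebraMap (FractionRing D) (FractionRing D)[S])
    · rw [hembed]
      exact map_injective _ (IsFractionRing.injective D _)
    · obtain ⟨⟨a, b⟩, h⟩ := IsLocalization.surj (nonZeroDivisors D) k
      refine ⟨(single s a, ⟨algebraMap D D[S] b, b, b.2, rfl⟩), ?_⟩
      simp [hembed, single_mul_single, h]
  have hM : M ≤ nonZeroDivisors D[S] := le_nonZeroDivisors_of_noZeroDivisors <| by
    rintro ⟨d, hd, hd0⟩
    exact nonZeroDivisors.ne_zero hd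
      ((map_eq_zero_iff _ (FaithfulSMul.algebraMap_injective D D[S])).1 hd0)
  have hQM : Disjoint (M : Set D[S]) Q := Set.disjoint_left.2 fun _ ⟨d, hd, hdm⟩ hmQ =>
    nonZeroDivisors.ne_zero hd (by rw [← Ideal.mem_bot, ← hQD, Ideal.mem_comap, hdm]; exact hmQ)
  exact hQ.exists_comap_eq_of_isLocalizationMap hloc hM hQM

theorem IsHeightOnePrime.exists_comap_expEmbed_eq {S G : Type*} [AddCommMonoid S] [UniqueSums S]
    [AddCommGroup G] {φ : S →+ G} (hφ : IsQuotientGroup φ) {Q : Ideal D[S]}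
    (hQ : IsHeightOnePrime Q) (hQS : ∀ s, single s (1 : D) ∉ Q) :
    ∃ Q' : Ideal D[G], IsHeightOnePrime Q' ∧ Q'.comap (expEmbed D φ) = Q := by
  set M := MonoidHom.mrange (of D S)
  have hloc : M.IsLocalizationMap (expEmbed D φ) := by
    refine isLocalizationMap_of_single ?_ (mapDomain_injective hφ.1) fun g d => ?_
    · rintro ⟨_, s, rfl⟩
      simpa [expEmbed] using (Group.isUnit (Multiplicative.ofAdd (φ s.toAdd))).map (of D G)
    · obtain ⟨s, t, rfl⟩ := hφ.2 g
      refine ⟨(single s d, ⟨of D S (.ofAdd t), t, rfl⟩), ?_⟩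
      simp [expEmbed, single_mul_single]
  have hM : M ≤ nonZeroDivisors D[S] := le_nonZeroDivisors_of_noZeroDivisors <| by
    rintro ⟨s, hs⟩
    simp at hs
  have hQM : Disjoint (M : Set D[S]) Q := Set.disjoint_left.2 fun _ ⟨s, hs⟩ hmQ =>
    hQS s.toAdd (by rwa [← of_apply, hs])
  exact hQ.exists_comap_eq_of_isLocalizationMap hloc hM hQM

end Localization

/-- For a domain `D` with quotient field `K` and a torsion-free monoid `S`
with quotient group `G`, every height-one prime of `D[S]` either is of the form `P[S]` for
`P ∈ 𝔛(D)`, or is the contraction of a height-one prime of `K[S]`; and likewise it either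
is of the form `D[P]` for `P ∈ 𝔛(S)`, or is the contraction of a height-one prime
of `D[G]`. -/
theorem heightOnePrime_of_addMonoidAlgebra
    {D S G : Type*} [CommRing D] [IsDomain D] [AddCancelCommMonoid S] [AddCommGroup G]
    (hS : AddTorsionFree S) (φ : S →+ G) (hφ : IsQuotientGroup φ)
    (Q : Ideal (AddMonoidAlgebra D S)) (hQ : IsHeightOnePrime Q) :
    ((∃ P : Ideal D, IsHeightOnePrime P ∧
        (Q : Set (AddMonoidAlgebra D S)) = coeffIn S P) ∨
      (∃ Q' : Ideal (AddMonoidAlgebra (FractionRing D) S), IsHeightOnePrime Q' ∧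
        (Q : Set (AddMonoidAlgebra D S)) =
          coeffEmbed D S ⁻¹' (Q' : Set (AddMonoidAlgebra (FractionRing D) S)))) ∧
    ((∃ P : Set S, IsMinMonoidPrime P ∧
        (Q : Set (AddMonoidAlgebra D S)) = expIn D P) ∨
      (∃ Q' : Ideal (AddMonoidAlgebra D G), IsHeightOnePrime Q' ∧
        (Q : Set (AddMonoidAlgebra D S)) =
          expEmbed D φ ⁻¹' (Q' : Set (AddMonoidAlgebra D G)))) := by
  have := hS.isAddTorsionFree
  have := hφ.isAddTorsionFree
  have : UniqueSums G := (twoUniqueSums_of_isAddTorsionFree G).toUniqueSums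
  have : UniqueSums S := .of_injective_addHom φ.toAddHom hφ.1 this
  constructor
  · by_cases hQD : Q.comap (algebraMap D D[S]) = ⊥
    · obtain ⟨Q', hQ', rfl⟩ := hQ.exists_comap_coeffEmbed_eq hQD
      exact .inr ⟨Q', hQ', rfl⟩
    · exact .inl ⟨_, hQ.isHeightOnePrime_comap_and_eq_coeffIn hQD⟩
  · by_cases hQS : ∃ s, single s (1 : D) ∈ Q
    · exact .inl ⟨_, hQ.isMinMonoidPrime_and_eq_expIn hQS⟩
    · obtain ⟨Q', hQ', rfl⟩ := hQ.exists_comap_expEmbed_eq hφ (not_exists.1 hQS)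
      exact .inr ⟨Q', hQ', rfl⟩
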